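/- Let G1 = N(μ1,σ1²), G2 = N(μ2,σ2²) be univariate Gaussians with σmax = max{σ1,σ2}, σmin = min{σ1,σ2}. If the total variation distance satisfies dTV(G1,G2) ≤ α for some 0 ≤ α < 1, then (μ2-μ1)²/σmax² ≤ 8α/(1-α) and σmax/σmin ≤ 2/(1-α)². -/

import Mathlib

open Real MeasureTheory ProbabilityTheory

/-- Total variation distance between two measures. -/
noncomputable def tvDist {α : Type*} [MeasurableSpace α] (P Q : Measure α) : ℝ :=
  ⨆ s : {s : Set α // MeasurableSet s}, |(P s.1).toReal - (Q s.1).toReal|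

open scoped NNReal

/-!
Since `min p q ≤ √(p q)`, the squared Hellinger distance `1 - ∫ √(p q)` is at most
`1 - ∫ min p q = P {q ≤ p} - Q {q ≤ p} ≤ d_TV(P, Q)`. For two Gaussians, completing the square
gives the Bhattacharyya coefficient in closed form,
`∫ √(p q) = √(2 σ₁ σ₂ / (σ₁² + σ₂²)) · exp (-(μ₂ - μ₁)² / (4 (σ₁² + σ₂²)))`,
a product of two factors that are at most `1`. Hence each factor is at least `1 - α`: the
exponential factor bounds the means (via `1 + t ≤ eᵗ`), the other one the ratio of the
standard deviations.
-/

lemma min_le_sqrt_mul {a b : ℝ} (ha : 0 ≤ a) (hb : 0 ≤ b) : min a b ≤ √(a * b) :=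
  (le_sqrt (le_min ha hb) (mul_nonneg ha hb)).mpr <|
    sq (min a b) ▸ mul_le_mul (min_le_left a b) (min_le_right a b) (le_min ha hb) ha

lemma sqrt_mul_le_add {a b : ℝ} (ha : 0 ≤ a) (hb : 0 ≤ b) : √(a * b) ≤ a + b :=
  (sqrt_le_left (add_nonneg ha hb)).mpr (by nlinarith)

lemma sub_min_eq_indicator {α : Type*} (p q : α → ℝ) :
    (fun x => p x - min (p x) (q x)) = {x | q x ≤ p x}.indicator (fun x => p x - q x) := by
  ext x
  by_cases h : q x ≤ p x
  · simp [h]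
  · simp [h, (not_le.mp h).le]

section TotalVariation

variable {Ω : Type*} [MeasurableSpace Ω]

lemma abs_sub_le_tvDist (P Q : Measure Ω) [IsFiniteMeasure P] [IsFiniteMeasure Q] {s : Set Ω}
    (hs : MeasurableSet s) : |(P s).toReal - (Q s).toReal| ≤ tvDist P Q := by
  refine le_ciSup (f := fun t : {t : Set Ω // MeasurableSet t} => |(P t).toReal - (Q t).toReal|)
    ⟨(P .univ).toReal + (Q .univ).toReal, ?_⟩ ⟨s, hs⟩
  rintro _ ⟨t, rfl⟩
  have hP : (P t).toReal ≤ (P .univ).toReal :=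
    ENNReal.toReal_mono (measure_ne_top _ _) (measure_mono (Set.subset_univ _))
  have hQ : (Q t).toReal ≤ (Q .univ).toReal :=
    ENNReal.toReal_mono (measure_ne_top _ _) (measure_mono (Set.subset_univ _))
  rw [abs_le]
  constructor <;> linarith [ENNReal.toReal_nonneg (a := P t), ENNReal.toReal_nonneg (a := Q t)]

theorem one_sub_integral_sqrt_mul_le_tvDist {ν P Q : Measure Ω} [IsProbabilityMeasure P]
    [IsFiniteMeasure Q] {p q : Ω → ℝ} (hpm : Measurable p) (hqm : Measurable q)
    (hp : Integrable p ν) (hq : Integrable q ν) (hp0 : 0 ≤ p) (hq0 : 0 ≤ q)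
    (hP : ∀ s, MeasurableSet s → (P s).toReal = ∫ x in s, p x ∂ν)
    (hQ : ∀ s, MeasurableSet s → (Q s).toReal = ∫ x in s, q x ∂ν) :
    1 - ∫ x, √(p x * q x) ∂ν ≤ tvDist P Q := by
  set s := {x | q x ≤ p x}
  have hs : MeasurableSet s := measurableSet_le hqm hpm
  have hmin : Integrable (fun x => min (p x) (q x)) ν := hp.inf hq
  have hsqrt : Integrable (fun x => √(p x * q x)) ν :=
    (hp.add hq).mono' (hpm.mul hqm).sqrt.aestronglyMeasurable <| ae_of_all _ fun x => by
      rw [norm_of_nonneg (sqrt_nonneg _)]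
      exact sqrt_mul_le_add (hp0 x) (hq0 x)
  have hp1 : ∫ x, p x ∂ν = 1 := by simpa using (hP .univ .univ).symm
  calc 1 - ∫ x, √(p x * q x) ∂ν ≤ ∫ x, p x ∂ν - ∫ x, min (p x) (q x) ∂ν := by
        rw [hp1]
        exact sub_le_sub_left (integral_mono hmin hsqrt fun x => min_le_sqrt_mul (hp0 x) (hq0 x)) 1
    _ = ∫ x in s, (p x - q x) ∂ν := by
        rw [← integral_sub hp hmin, sub_min_eq_indicator, integral_indicator hs]
    _ = (P s).toReal - (Q s).toReal := by
        rw [integral_sub hp.integrableOn hq.integrableOn, hP s hs, hQ s hs]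
    _ ≤ tvDist P Q := (le_abs_self _).trans (abs_sub_le_tvDist P Q hs)

end TotalVariation

lemma toReal_gaussianReal_apply (μ : ℝ) {v : ℝ≥0} (hv : v ≠ 0) (s : Set ℝ) :
    (gaussianReal μ v s).toReal = ∫ x in s, gaussianPDFReal μ v x := by
  rw [gaussianReal_apply_eq_integral μ hv,
    ENNReal.toReal_ofReal (setIntegral_nonneg_of_ae (ae_of_all _ (gaussianPDFReal_nonneg μ v)))]

theorem one_sub_integral_sqrt_gaussianPDFReal_mul_le_tvDist (μ₁ μ₂ : ℝ) {v₁ v₂ : ℝ≥0}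
    (hv₁ : v₁ ≠ 0) (hv₂ : v₂ ≠ 0) :
    1 - ∫ x, √(gaussianPDFReal μ₁ v₁ x * gaussianPDFReal μ₂ v₂ x) ≤
      tvDist (gaussianReal μ₁ v₁) (gaussianReal μ₂ v₂) :=
  one_sub_integral_sqrt_mul_le_tvDist (measurable_gaussianPDFReal _ _)
    (measurable_gaussianPDFReal _ _) (integrable_gaussianPDFReal _ _)
    (integrable_gaussianPDFReal _ _) (gaussianPDFReal_nonneg _ _) (gaussianPDFReal_nonneg _ _)
    (fun s _ => toReal_gaussianReal_apply μ₁ hv₁ s) (fun s _ => toReal_gaussianReal_apply μ₂ hv₂ s)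

lemma gaussianPDFReal_sq_toNNReal (μ : ℝ) {σ : ℝ} (hσ : 0 < σ) (x : ℝ) :
    gaussianPDFReal μ (σ ^ 2).toNNReal x = (√(2 * π) * σ)⁻¹ * exp (-(x - μ) ^ 2 / (2 * σ ^ 2)) := by
  rw [gaussianPDFReal, Real.coe_toNNReal _ (sq_nonneg σ), sqrt_mul (by positivity), sqrt_sq hσ.le]

lemma sqrt_gaussianPDFReal_mul (μ₁ μ₂ : ℝ) {σ₁ σ₂ : ℝ} (h₁ : 0 < σ₁) (h₂ : 0 < σ₂) (x : ℝ) :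
    √(gaussianPDFReal μ₁ (σ₁ ^ 2).toNNReal x * gaussianPDFReal μ₂ (σ₂ ^ 2).toNNReal x) =
      (√(2 * π * σ₁ * σ₂))⁻¹ * exp (-((x - μ₁) ^ 2 / (4 * σ₁ ^ 2) + (x - μ₂) ^ 2 / (4 * σ₂ ^ 2))) := by
  rw [sqrt_eq_iff_eq_sq (mul_nonneg (gaussianPDFReal_nonneg _ _ x) (gaussianPDFReal_nonneg _ _ x))
    (by positivity), gaussianPDFReal_sq_toNNReal μ₁ h₁,
    gaussianPDFReal_sq_toNNReal μ₂ h₂, mul_pow, inv_pow, sq_sqrt (by positivity), ← exp_nat_mul]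
  have h2π : √(2 * π) ^ 2 = 2 * π := sq_sqrt (by positivity)
  field_simp
  rw [h2π, mul_assoc, ← exp_add]
  congr 2
  push_cast
  field_simp
  ring

lemma add_div_sq_eq_complete_square (x μ₁ μ₂ : ℝ) {σ₁ σ₂ : ℝ} (h₁ : 0 < σ₁) (h₂ : 0 < σ₂) :
    (x - μ₁) ^ 2 / (4 * σ₁ ^ 2) + (x - μ₂) ^ 2 / (4 * σ₂ ^ 2) =
      (μ₂ - μ₁) ^ 2 / (4 * (σ₁ ^ 2 + σ₂ ^ 2)) + (σ₁ ^ 2 + σ₂ ^ 2) / (4 * σ₁ ^ 2 * σ₂ ^ 2) *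
        (x - (μ₁ * σ₂ ^ 2 + μ₂ * σ₁ ^ 2) / (σ₁ ^ 2 + σ₂ ^ 2)) ^ 2 := by
  field_simp
  ring

lemma integral_exp_neg_mul_sub_sq (a c : ℝ) : ∫ x, exp (-a * (x - c) ^ 2) = √(π / a) :=
  (integral_sub_right_eq_self (fun x => exp (-a * x ^ 2)) c).trans (integral_gaussian a)

theorem integral_sqrt_gaussianPDFReal_mul (μ₁ μ₂ : ℝ) {σ₁ σ₂ : ℝ} (h₁ : 0 < σ₁) (h₂ : 0 < σ₂) :
    ∫ x, √(gaussianPDFReal μ₁ (σ₁ ^ 2).toNNReal x * gaussianPDFReal μ₂ (σ₂ ^ 2).toNNReal x) =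
      √(2 * σ₁ * σ₂ / (σ₁ ^ 2 + σ₂ ^ 2)) * exp (-((μ₂ - μ₁) ^ 2 / (4 * (σ₁ ^ 2 + σ₂ ^ 2)))) := by
  set a := (σ₁ ^ 2 + σ₂ ^ 2) / (4 * σ₁ ^ 2 * σ₂ ^ 2) with ha
  set E := exp (-((μ₂ - μ₁) ^ 2 / (4 * (σ₁ ^ 2 + σ₂ ^ 2))))
  have h_pointwise (x : ℝ) :
      √(gaussianPDFReal μ₁ (σ₁ ^ 2).toNNReal x * gaussianPDFReal μ₂ (σ₂ ^ 2).toNNReal x) =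
        (√(2 * π * σ₁ * σ₂))⁻¹ * E *
          exp (-a * (x - (μ₁ * σ₂ ^ 2 + μ₂ * σ₁ ^ 2) / (σ₁ ^ 2 + σ₂ ^ 2)) ^ 2) := by
    rw [sqrt_gaussianPDFReal_mul μ₁ μ₂ h₁ h₂, add_div_sq_eq_complete_square x μ₁ μ₂ h₁ h₂, neg_add,
      exp_add, neg_mul]
    exact (mul_assoc _ _ _).symm
  have h_const : (√(2 * π * σ₁ * σ₂))⁻¹ * √(π / a) = √(2 * σ₁ * σ₂ / (σ₁ ^ 2 + σ₂ ^ 2)) := by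
    rw [← sqrt_inv, ← sqrt_mul (by positivity)]
    congr 1
    rw [ha]
    field_simp
    ring
  simp_rw [h_pointwise]
  rw [integral_const_mul, integral_exp_neg_mul_sub_sq, ← h_const]
  ring

lemma le_div_one_sub_of_one_sub_le_exp_neg {α t : ℝ} (hα : α < 1) (h : 1 - α ≤ exp (-t)) :
    t ≤ α / (1 - α) := by
  have h1α : 0 < 1 - α := sub_pos.2 hα
  have h_mul : (1 - α) * exp t ≤ 1 := by
    simpa [← exp_add] using mul_le_mul_of_nonneg_right h (exp_nonneg t)
  rw [le_div_iff₀ h1α]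
  nlinarith [mul_le_mul_of_nonneg_left (add_one_le_exp t) h1α.le]

lemma div_sq_max_le_of_div_le {d r a b : ℝ} (hd : 0 ≤ d) (ha : 0 < a) (hb : 0 < b)
    (h : d / (4 * (a ^ 2 + b ^ 2)) ≤ r) : d / max a b ^ 2 ≤ 8 * r := by
  have h_sum : a ^ 2 + b ^ 2 ≤ 2 * max a b ^ 2 := by
    nlinarith [pow_le_pow_left₀ ha.le (le_max_left a b) 2, pow_le_pow_left₀ hb.le (le_max_right a b) 2]
  have hr : 0 ≤ r := (div_nonneg hd (by positivity)).trans h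
  rw [div_le_iff₀ (by positivity)] at h ⊢
  nlinarith [mul_le_mul_of_nonneg_left h_sum hr]

lemma max_div_min_le_of_le_sqrt {a b c : ℝ} (ha : 0 < a) (hb : 0 < b) (hc : 0 < c)
    (h : c ≤ √(2 * a * b / (a ^ 2 + b ^ 2))) : max a b / min a b ≤ 2 / c ^ 2 := by
  rw [le_sqrt hc.le (by positivity), le_div_iff₀ (by positivity)] at h
  rw [div_le_div_iff₀ (lt_min ha hb) (by positivity)]
  rcases le_total a b with hab | hab
  · rw [max_eq_right hab, min_eq_left hab]
    nlinarith [mul_pos hb (sq_pos_of_pos hc)]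
  · rw [max_eq_left hab, min_eq_right hab]
    nlinarith [mul_pos ha (sq_pos_of_pos hc)]

theorem gaussian_tv_parameter_bounds_general (μ₁ σ₁ μ₂ σ₂ α : ℝ) (h₁ : 0 < σ₁) (h₂ : 0 < σ₂)
    (hα1 : α < 1)
    (htv : tvDist (gaussianReal μ₁ (σ₁ ^ 2).toNNReal) (gaussianReal μ₂ (σ₂ ^ 2).toNNReal) ≤ α) :
    (μ₂ - μ₁) ^ 2 / (max σ₁ σ₂) ^ 2 ≤ 8 * α / (1 - α) ∧
    max σ₁ σ₂ / min σ₁ σ₂ ≤ 2 / (1 - α) ^ 2 := by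
  have hBC := (one_sub_integral_sqrt_gaussianPDFReal_mul_le_tvDist μ₁ μ₂
    (Real.toNNReal_pos.2 (pow_pos h₁ 2)).ne' (Real.toNNReal_pos.2 (pow_pos h₂ 2)).ne').trans htv
  rw [integral_sqrt_gaussianPDFReal_mul μ₁ μ₂ h₁ h₂, sub_le_comm] at hBC
  have h_shape : √(2 * σ₁ * σ₂ / (σ₁ ^ 2 + σ₂ ^ 2)) ≤ 1 :=
    sqrt_le_one.2 ((div_le_one (by positivity)).2 (two_mul_le_add_sq σ₁ σ₂))
  have h_shift : exp (-((μ₂ - μ₁) ^ 2 / (4 * (σ₁ ^ 2 + σ₂ ^ 2)))) ≤ 1 :=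
    exp_le_one_iff.2 (neg_nonpos.2 (by positivity))
  constructor
  · rw [mul_div_assoc]
    exact div_sq_max_le_of_div_le (sq_nonneg _) h₁ h₂ (le_div_one_sub_of_one_sub_le_exp_neg hα1
      (hBC.trans (mul_le_of_le_one_left (exp_nonneg _) h_shape)))
  · exact max_div_min_le_of_le_sqrt h₁ h₂ (sub_pos.2 hα1)
      (hBC.trans (mul_le_of_le_one_right (sqrt_nonneg _) h_shift))

theorem gaussian_tv_parameter_bounds (μ₁ σ₁ μ₂ σ₂ α : ℝ) (h₁ : 0 < σ₁) (h₂ : 0 < σ₂)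
    (hα0 : 0 ≤ α) (hα1 : α < 1)
    (htv : tvDist (gaussianReal μ₁ (σ₁ ^ 2).toNNReal) (gaussianReal μ₂ (σ₂ ^ 2).toNNReal) ≤ α) :
    (μ₂ - μ₁) ^ 2 / (max σ₁ σ₂) ^ 2 ≤ 8 * α / (1 - α) ∧
    max σ₁ σ₂ / min σ₁ σ₂ ≤ 2 / (1 - α) ^ 2 :=
  gaussian_tv_parameter_bounds_general μ₁ σ₁ μ₂ σ₂ α h₁ h₂ hα1 htv
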